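/- arXiv:1307.5053 — 2 statements merged into one kernel-verified Lean document; each statement's English description precedes it below -/
import Mathlib

section
/- Let K ⊂ ℝ^d be a self-similar set generated by contracting similarities ψ₁,…,ψ_k with ratios r₁,…,r_k satisfying the open set condition, with Σᵢ rᵢ^d = 1 (so dim_M K = d), and suppose ψ_k(K) is contained in the interior of K. Let U = K°. Then the boundary of K satisfies ∂K ⊆ L, where L is the self-similar attractor of ψ₁,…,ψ_{k−1}; consequently the upper Minkowski dimension of ∂K is strictly less than d. -/
open Metric Set MeasureTheory

/-- The upper Minkowski dimension of a bounded set `A ⊆ ℝ^d`, expressed through the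
volumes of its parallel sets: `dim_M A = d − liminf_{ε→0⁺} log vol(A_ε) / log ε`. -/
noncomputable def upperMinkowskiDim {d : ℕ} (A : Set (EuclideanSpace ℝ (Fin d))) : ℝ :=
  (d : ℝ) - Filter.liminf
    (fun ε : ℝ =>
      Real.log ((volume (Metric.cthickening ε A)).toReal) / Real.log ε)
    (nhdsWithin 0 (Set.Ioi 0))

/-!
A boundary point `x` of `K` lies in some `ψ i '' K`, but not in `ψ_m '' K ⊆ K°`; and `x = ψ i y`
forces `y ∈ ∂K`, because the `ψ i` are open maps sending `K` into itself. So
`∂K ⊆ ⋃_{i<m} ψ i '' ∂K`, and since the first `m` maps contract `x ↦ infDist x L`, the bounded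
set `∂K` lies in `L`.

For the dimension, the `ε`-neighbourhood of `L` is covered by the images of the
`ε/rᵢ`-neighbourhoods, so `vol(L_ε) ≤ θ vol(L_{ε/ρ})` with `θ = Σ_{i<m} rᵢ^d < 1` and
`ρ = min_{i<m} rᵢ`. Iterating gives `vol(L_ε) = O(ε^δ)` with `δ = log_ρ θ > 0`, and since
`(∂K)_ε ⊆ L_ε` this yields `dim_M ∂K ≤ d - δ`.
-/

open Filter Topology Function
open scoped Pointwise

theorem isometry_inv_smul_of_dist_eq {X E : Type*} [PseudoMetricSpace X] [NormedAddCommGroup E]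
    [NormedSpace ℝ E] {f : X → E} {r : ℝ} (hr : 0 < r)
    (hf : ∀ x y, dist (f x) (f y) = r * dist x y) :
    Isometry fun x => r⁻¹ • f x :=
  Isometry.of_dist_eq fun x y => by
    rw [dist_smul₀, hf, norm_inv, Real.norm_of_nonneg hr.le, inv_mul_cancel_left₀ hr.ne']

theorem Isometry.surjective_of_finiteDimensional {E : Type*} [NormedAddCommGroup E]
    [NormedSpace ℝ E] [StrictConvexSpace ℝ E] [FiniteDimensional ℝ E] {g : E → E}
    (hg : Isometry g) : Surjective g := by
  set A := hg.affineIsometryOfStrictConvexSpace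
  have hlin : Surjective A.linear :=
    LinearMap.injective_iff_surjective.mp A.linearIsometry.injective
  exact A.toAffineMap.linear_surjective_iff.mp hlin

theorem surjective_of_dist_eq {E : Type*} [NormedAddCommGroup E] [NormedSpace ℝ E]
    [StrictConvexSpace ℝ E] [FiniteDimensional ℝ E] {f : E → E} {r : ℝ} (hr : 0 < r)
    (hf : ∀ x y, dist (f x) (f y) = r * dist x y) : Surjective f := by
  intro y
  obtain ⟨x, hx⟩ :=
    (isometry_inv_smul_of_dist_eq hr hf).surjective_of_finiteDimensional (r⁻¹ • y)
  exact ⟨x, smul_right_injective E (inv_ne_zero hr.ne') hx⟩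

theorem isOpenMap_of_dist_eq {X Y : Type*} [PseudoMetricSpace X] [PseudoMetricSpace Y]
    {f : X → Y} {r : ℝ} (hr : 0 < r) (hf : ∀ x y, dist (f x) (f y) = r * dist x y)
    (hsurj : Surjective f) : IsOpenMap f := by
  intro U hU
  rw [Metric.isOpen_iff] at hU ⊢
  rintro _ ⟨x, hxU, rfl⟩
  obtain ⟨δ, hδ, hball⟩ := hU x hxU
  refine ⟨r * δ, mul_pos hr hδ, fun z hz => ?_⟩
  obtain ⟨w, rfl⟩ := hsurj z
  rw [mem_ball, hf] at hz
  exact ⟨w, hball (mem_ball.mpr (lt_of_mul_lt_mul_left hz hr.le)), rfl⟩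

theorem frontier_subset_iUnion_image_frontier {X : Type*} [TopologicalSpace X] {m : ℕ}
    {ψ : Fin (m + 1) → X → X} (hopen : ∀ i, IsOpenMap (ψ i)) {K : Set X} (hK : IsClosed K)
    (hattr : K = ⋃ i, ψ i '' K) (hlast : ψ (Fin.last m) '' K ⊆ interior K) :
    frontier K ⊆ ⋃ i : Fin m, ψ i.castSucc '' frontier K := by
  rw [hK.frontier_eq]
  rintro x ⟨hxK, hxint⟩
  rw [hattr, mem_iUnion] at hxK
  obtain ⟨i, y, hyK, rfl⟩ := hxK
  induction i using Fin.lastCases with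
  | last => exact absurd (hlast (mem_image_of_mem _ hyK)) hxint
  | cast j =>
    refine mem_iUnion.mpr ⟨j, y, ⟨hyK, fun hyint => hxint ?_⟩, rfl⟩
    have hsub : ψ j.castSucc '' K ⊆ K :=
      (subset_iUnion (fun i => ψ i '' K) _).trans hattr.symm.subset
    exact interior_mono hsub ((hopen _).image_interior_subset K (mem_image_of_mem _ hyint))

theorem infDist_le_mul_infDist_of_mapsTo {X : Type*} [PseudoMetricSpace X] {f : X → X}
    {K : NNReal} (hf : LipschitzWith K f) {L : Set X} (hLne : L.Nonempty) (hfL : MapsTo f L L)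
    (x : X) :
    infDist (f x) L ≤ K * infDist x L := by
  have := hLne.to_subtype
  rw [infDist_eq_iInf (s := L) (x := x), Real.mul_iInf_of_nonneg K.coe_nonneg]
  exact le_ciInf fun y => (infDist_le_dist_of_mem (hfL y.2)).trans
    (hf.dist_le_mul x y)

theorem subset_of_subset_iUnion_image {X : Type*} [PseudoMetricSpace X] {ι : Type*}
    {f : ι → X → X} {K : NNReal} (hK : K < 1) (hf : ∀ i, LipschitzWith K (f i)) {L F : Set X}
    (hL : IsClosed L) (hLne : L.Nonempty) (hfL : ∀ i, MapsTo (f i) L L)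
    (hF : Bornology.IsBounded F) (hFf : F ⊆ ⋃ i, f i '' F) : F ⊆ L := by
  obtain ⟨z, hz⟩ := id hLne
  obtain ⟨C, hC⟩ := hF.subset_closedBall z
  have hbound : ∀ n : ℕ, ∀ x ∈ F, infDist x L ≤ K ^ n * C := by
    intro n
    induction n with
    | zero =>
      intro x hx
      simpa using (infDist_le_dist_of_mem hz).trans (mem_closedBall.mp (hC hx))
    | succ n ih =>
      intro x hx
      obtain ⟨i, y, hy, rfl⟩ := mem_iUnion.mp (hFf hx)
      calc infDist (f i y) L ≤ K * infDist y L :=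
            infDist_le_mul_infDist_of_mapsTo (hf i) hLne (hfL i) y
        _ ≤ K * (K ^ n * C) := by gcongr; exact ih y hy
        _ = K ^ (n + 1) * C := by ring
  have hlim : Tendsto (fun n : ℕ => (K : ℝ) ^ n * C) atTop (𝓝 0) := by
    simpa using (tendsto_pow_atTop_nhds_zero_of_lt_one K.coe_nonneg hK).mul_const C
  intro x hx
  rw [hL.mem_iff_infDist_zero hLne]
  exact le_antisymm (ge_of_tendsto' hlim fun n => hbound n x hx) infDist_nonneg

theorem exists_lipschitzWith_lt_one_of_dist_eq {X ι : Type*} [PseudoMetricSpace X] [Fintype ι]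
    {f : ι → X → X} {r : ι → ℝ} (hr : ∀ i, r i < 1)
    (hf : ∀ i x y, dist (f i x) (f i y) = r i * dist x y) :
    ∃ K : NNReal, K < 1 ∧ ∀ i, LipschitzWith K (f i) := by
  refine ⟨Finset.univ.sup fun i => (r i).toNNReal,
    (Finset.sup_lt_iff zero_lt_one).mpr fun i _ => Real.toNNReal_lt_one.mpr (hr i),
    fun i => LipschitzWith.of_dist_le_mul fun x y => ?_⟩
  rw [hf]
  gcongr
  exact (Real.le_coe_toNNReal (r i)).trans
    (NNReal.coe_le_coe.mpr (Finset.le_sup (f := fun i => (r i).toNNReal) (Finset.mem_univ i)))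

theorem frontier_subset_of_image_last_subset_interior {E : Type*} [NormedAddCommGroup E]
    [NormedSpace ℝ E] [StrictConvexSpace ℝ E] [FiniteDimensional ℝ E] {m : ℕ}
    {ψ : Fin (m + 1) → E → E} {r : Fin (m + 1) → ℝ} (hr0 : ∀ i, 0 < r i) (hr1 : ∀ i, r i < 1)
    (hψ : ∀ i x y, dist (ψ i x) (ψ i y) = r i * dist x y) {K : Set E} (hK : IsCompact K)
    (hattr : K = ⋃ i, ψ i '' K) (hlast : ψ (Fin.last m) '' K ⊆ interior K) {L : Set E}
    (hL : IsClosed L) (hLne : L.Nonempty) (hLattr : L = ⋃ i : Fin m, ψ i.castSucc '' L) :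
    frontier K ⊆ L := by
  obtain ⟨c, hc, hlip⟩ := exists_lipschitzWith_lt_one_of_dist_eq
    (f := fun i : Fin m => ψ i.castSucc) (fun i => hr1 _) (fun i => hψ _)
  exact subset_of_subset_iUnion_image hc hlip hL hLne
    (fun i x hx => by rw [hLattr]; exact mem_iUnion.mpr ⟨i, x, hx, rfl⟩)
    (hK.isBounded.subset hK.isClosed.frontier_subset)
    (frontier_subset_iUnion_image_frontier
      (fun i => isOpenMap_of_dist_eq (hr0 i) (hψ i) (surjective_of_dist_eq (hr0 i) (hψ i)))
      hK.isClosed hattr hlast)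

theorem cthickening_subset_iUnion_image_cthickening {X : Type*} [MetricSpace X] [ProperSpace X]
    {ι : Type*} {f : ι → X → X} {r : ι → ℝ} (hr : ∀ i, 0 < r i)
    (hf : ∀ i x y, dist (f i x) (f i y) = r i * dist x y) (hsurj : ∀ i, Surjective (f i))
    {L : Set X} (hL : IsClosed L) (hLf : L ⊆ ⋃ i, f i '' L) {ε : ℝ} (hε : 0 ≤ ε) :
    cthickening ε L ⊆ ⋃ i, f i '' cthickening (ε / r i) L := by
  intro y hy
  rw [hL.cthickening_eq_biUnion_closedBall hε, mem_iUnion₂] at hy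
  obtain ⟨z, hzL, hyz⟩ := hy
  obtain ⟨i, l, hl, rfl⟩ := mem_iUnion.mp (hLf hzL)
  obtain ⟨x, rfl⟩ := hsurj i y
  refine mem_iUnion.mpr ⟨i, x, mem_cthickening_of_dist_le x l _ _ hl ?_, rfl⟩
  rw [le_div_iff₀' (hr i), ← hf]
  exact mem_closedBall.mp hyz

theorem le_mul_rpow_logb_of_le_mul_comp_div {v : ℝ → ℝ} (hv : Monotone v) (hv1 : 0 ≤ v 1)
    {θ ρ : ℝ} (hθ0 : 0 < θ) (hθ1 : θ ≤ 1) (hρ0 : 0 < ρ) (hρ1 : ρ < 1)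
    (hstep : ∀ ε, 0 < ε → v ε ≤ θ * v (ε / ρ)) {ε : ℝ} (hε0 : 0 < ε) (hε1 : ε ≤ 1) :
    v ε ≤ θ⁻¹ * v 1 * ε ^ Real.logb ρ θ := by
  have hiter : ∀ n : ℕ, ∀ ε, 0 < ε → v ε ≤ θ ^ n * v (ε / ρ ^ n) := by
    intro n
    induction n with
    | zero => simp
    | succ n ih =>
      intro ε hε
      calc v ε ≤ θ ^ n * v (ε / ρ ^ n) := ih ε hε
        _ ≤ θ ^ n * (θ * v (ε / ρ ^ n / ρ)) := by
            gcongr; exact hstep _ (by positivity)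
        _ = θ ^ (n + 1) * v (ε / ρ ^ (n + 1)) := by rw [div_div, ← pow_succ]; ring
  obtain ⟨n, hn1, hn⟩ := exists_nat_pow_near_of_lt_one hε0 hε1 hρ0 hρ1
  have hlogb : 0 ≤ Real.logb ρ θ := Real.logb_nonneg_of_base_lt_one hρ0 hρ1 hθ0 hθ1
  have hθpow : θ ^ (n + 1) ≤ ε ^ Real.logb ρ θ := by
    calc θ ^ (n + 1) = (ρ ^ (n + 1)) ^ Real.logb ρ θ := by
          rw [← Real.rpow_pow_comm hρ0.le, Real.rpow_logb hρ0 hρ1.ne hθ0]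
      _ ≤ ε ^ Real.logb ρ θ := Real.rpow_le_rpow (by positivity) hn1.le hlogb
  calc v ε ≤ θ ^ n * v (ε / ρ ^ n) := hiter n ε hε0
    _ ≤ θ ^ n * v 1 := by
        gcongr
        exact hv ((div_le_one (by positivity)).mpr hn)
    _ = θ⁻¹ * v 1 * θ ^ (n + 1) := by field_simp; ring
    _ ≤ θ⁻¹ * v 1 * ε ^ Real.logb ρ θ := by gcongr

section Volume

variable {V : Type*} [NormedAddCommGroup V] [InnerProductSpace ℝ V] [FiniteDimensional ℝ V]
  [MeasurableSpace V] [BorelSpace V]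

theorem volume_image_of_dist_eq {f : V → V} {r : ℝ} (hr : 0 < r)
    (hf : ∀ x y, dist (f x) (f y) = r * dist x y) (s : Set V) :
    volume (f '' s) = ENNReal.ofReal (r ^ Module.finrank ℝ V) * volume s := by
  have hfs : f '' s = r • (fun x => r⁻¹ • f x) '' s := by
    rw [← image_smul, image_image]
    simp only [smul_smul, mul_inv_cancel₀ hr.ne', one_smul]
  rw [← InnerProductSpace.euclideanHausdorffMeasure_eq_volume, hfs,
    Measure.euclideanHausdorffMeasure_smul₀ _ hr.ne',
    (isometry_inv_smul_of_dist_eq hr hf).euclideanHausdorffMeasure_image, ENNReal.smul_def,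
    smul_eq_mul, ENNReal.ofReal, Real.toNNReal_pow hr.le, Real.nnnorm_of_nonneg hr.le,
    Real.toNNReal_of_nonneg hr.le]

theorem volume_cthickening_le_of_subset_iUnion_image {ι : Type*} [Fintype ι]
    {f : ι → V → V} {r : ι → ℝ} (hr : ∀ i, 0 < r i)
    (hf : ∀ i x y, dist (f i x) (f i y) = r i * dist x y) {ρ : ℝ} (hρ : 0 < ρ)
    (hρr : ∀ i, ρ ≤ r i) {L : Set V} (hL : IsClosed L) (hLf : L ⊆ ⋃ i, f i '' L)
    {ε : ℝ} (hε : 0 ≤ ε) :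
    volume (cthickening ε L) ≤
      ENNReal.ofReal (∑ i, r i ^ Module.finrank ℝ V) * volume (cthickening (ε / ρ) L) := by
  have hsurj i := surjective_of_dist_eq (hr i) (hf i)
  calc volume (cthickening ε L)
      ≤ ∑ i, volume (f i '' cthickening (ε / r i) L) :=
        (measure_mono (cthickening_subset_iUnion_image_cthickening hr hf hsurj hL hLf hε)).trans
          (measure_iUnion_fintype_le _ _)
    _ ≤ ∑ i, ENNReal.ofReal (r i ^ Module.finrank ℝ V) * volume (cthickening (ε / ρ) L) := by
        gcongr with i
        rw [volume_image_of_dist_eq (hr i) (hf i)]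
        gcongr
        exact cthickening_mono (div_le_div_of_nonneg_left hε hρ (hρr i)) L
    _ = ENNReal.ofReal (∑ i, r i ^ Module.finrank ℝ V) * volume (cthickening (ε / ρ) L) := by
        rw [← Finset.sum_mul, ENNReal.ofReal_sum_of_nonneg fun i _ => pow_nonneg (hr i).le _]

theorem exists_volume_cthickening_le_mul_rpow_logb {ι : Type*} [Fintype ι] [Nonempty ι]
    {f : ι → V → V} {r : ι → ℝ} (hr : ∀ i, 0 < r i)
    (hf : ∀ i x y, dist (f i x) (f i y) = r i * dist x y)
    (hsum : ∑ i, r i ^ Module.finrank ℝ V ≤ 1) {ρ : ℝ} (hρ0 : 0 < ρ) (hρ1 : ρ < 1)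
    (hρr : ∀ i, ρ ≤ r i) {L : Set V} (hL : IsCompact L) (hLf : L ⊆ ⋃ i, f i '' L) :
    ∃ C, ∀ ε, 0 < ε → ε ≤ 1 → volume (cthickening ε L) ≤
      ENNReal.ofReal (C * ε ^ Real.logb ρ (∑ i, r i ^ Module.finrank ℝ V)) := by
  set θ := ∑ i, r i ^ Module.finrank ℝ V
  have hθ : 0 < θ := Finset.sum_pos (fun i _ => pow_pos (hr i) _) Finset.univ_nonempty
  have hfin ε : volume (cthickening ε L) ≠ ⊤ := hL.isBounded.cthickening.measure_lt_top.ne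
  set v := fun ε => (volume (cthickening ε L)).toReal
  have hv : Monotone v := fun a b hab =>
    ENNReal.toReal_mono (hfin b) (measure_mono (cthickening_mono hab L))
  have hstep ε (hε : 0 < ε) : v ε ≤ θ * v (ε / ρ) := by
    have h := volume_cthickening_le_of_subset_iUnion_image hr hf hρ0 hρr hL.isClosed hLf hε.le
    rwa [← ENNReal.ofReal_toReal (hfin ε), ← ENNReal.ofReal_toReal (hfin (ε / ρ)),
      ← ENNReal.ofReal_mul hθ.le, ENNReal.ofReal_le_ofReal_iff (by positivity)] at h
  refine ⟨θ⁻¹ * v 1, fun ε hε0 hε1 => ?_⟩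
  rw [← ENNReal.ofReal_toReal (hfin ε)]
  exact ENNReal.ofReal_le_ofReal (le_mul_rpow_logb_of_le_mul_comp_div hv ENNReal.toReal_nonneg
    hθ hsum hρ0 hρ1 hstep hε0 hε1)

end Volume

theorem log_mul_rpow_div_log {a ε : ℝ} (ha : 0 < a) (hε0 : 0 < ε) (hε1 : ε ≠ 1) (s : ℝ) :
    Real.log (a * ε ^ s) / Real.log ε = s + Real.log a / Real.log ε := by
  have hlog : Real.log ε ≠ 0 := Real.log_ne_zero_of_pos_of_ne_one hε0 hε1
  rw [Real.log_mul ha.ne' (Real.rpow_pos_of_pos hε0 s).ne', Real.log_rpow hε0]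
  field_simp
  ring

theorem tendsto_add_log_div_log (s a : ℝ) :
    Tendsto (fun ε => s + Real.log a / Real.log ε) (𝓝[>] 0) (𝓝 s) := by
  simpa using tendsto_const_nhds.add (tendsto_const_nhds.div_atBot Real.tendsto_log_nhdsGT_zero)

theorem upperMinkowskiDim_le_of_volume_cthickening_le {d : ℕ}
    {A : Set (EuclideanSpace ℝ (Fin d))} (hA : A.Nonempty) {C δ : ℝ}
    (hvol : ∀ᶠ ε in 𝓝[>] 0, volume (cthickening ε A) ≤ ENNReal.ofReal (C * ε ^ δ)) :
    upperMinkowskiDim A ≤ d - δ := by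
  obtain ⟨x, hx⟩ := hA
  set c := (volume (ball (0 : EuclideanSpace ℝ (Fin d)) 1)).toReal
  have hc : 0 < c := ENNReal.toReal_pos (measure_ball_pos _ _ one_pos).ne' measure_ball_lt_top.ne
  set u := fun ε : ℝ => Real.log (volume (cthickening ε A)).toReal / Real.log ε
  -- The upper bound on `u` only provides the coboundedness that `liminf_le_liminf` requires.
  have hbounds : ∀ᶠ ε in 𝓝[>] 0,
      δ + Real.log C / Real.log ε ≤ u ε ∧ u ε ≤ d + Real.log c / Real.log ε := by
    filter_upwards [hvol, Ioo_mem_nhdsGT one_pos] with ε hε ⟨hε0, hε1⟩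
    have hlog : Real.log ε < 0 := Real.log_neg hε0 hε1
    have hball : ENNReal.ofReal (c * ε ^ (d : ℝ)) ≤ volume (cthickening ε A) := by
      calc ENNReal.ofReal (c * ε ^ (d : ℝ)) = volume (closedBall x ε) := by
            rw [Measure.addHaar_closedBall _ _ hε0.le, finrank_euclideanSpace_fin,
              Real.rpow_natCast, mul_comm, ENNReal.ofReal_mul (by positivity),
              ENNReal.ofReal_toReal measure_ball_lt_top.ne]
        _ ≤ volume (cthickening ε A) := measure_mono (closedBall_subset_cthickening hx ε)
    have hfin : volume (cthickening ε A) ≠ ⊤ := ne_top_of_le_ne_top ENNReal.ofReal_ne_top hε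
    have hlower : c * ε ^ (d : ℝ) ≤ (volume (cthickening ε A)).toReal :=
      (ENNReal.ofReal_le_iff_le_toReal hfin).mp hball
    have hlower0 : 0 < (volume (cthickening ε A)).toReal := lt_of_lt_of_le (by positivity) hlower
    have hupper0 : 0 < C * ε ^ δ := ENNReal.ofReal_pos.mp <|
      (ENNReal.toReal_pos_iff.mp hlower0).1.trans_le hε
    have hC : 0 < C := pos_of_mul_pos_left hupper0 (Real.rpow_pos_of_pos hε0 δ).le
    constructor
    · rw [← log_mul_rpow_div_log hC hε0 hε1.ne]
      exact div_le_div_of_nonpos_of_le hlog.le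
        (Real.log_le_log hlower0 (ENNReal.toReal_le_of_le_ofReal hupper0.le hε))
    · rw [← log_mul_rpow_div_log hc hε0 hε1.ne]
      exact div_le_div_of_nonpos_of_le hlog.le (Real.log_le_log (by positivity) hlower)
  have hliminf : δ ≤ liminf u (𝓝[>] 0) :=
    calc δ = liminf (fun ε => δ + Real.log C / Real.log ε) (𝓝[>] 0) :=
          (tendsto_add_log_div_log δ C).liminf_eq.symm
      _ ≤ liminf u (𝓝[>] 0) :=
          liminf_le_liminf (hbounds.mono fun _ h => h.1)
            (tendsto_add_log_div_log δ C).isBoundedUnder_ge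
            ((tendsto_add_log_div_log d c).isBoundedUnder_le.mono_le
              (hbounds.mono fun _ h => h.2)).isCoboundedUnder_ge
  rw [upperMinkowskiDim]
  linarith

theorem upperMinkowskiDim_lt_of_subset_attractor {d : ℕ} {ι : Type*} [Fintype ι]
    {f : ι → EuclideanSpace ℝ (Fin d) → EuclideanSpace ℝ (Fin d)} {r : ι → ℝ}
    (hr0 : ∀ i, 0 < r i) (hr1 : ∀ i, r i < 1)
    (hf : ∀ i x y, dist (f i x) (f i y) = r i * dist x y) (hsum : ∑ i, r i ^ d < 1)
    {L : Set (EuclideanSpace ℝ (Fin d))} (hL : IsCompact L) (hLf : L ⊆ ⋃ i, f i '' L)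
    {A : Set (EuclideanSpace ℝ (Fin d))} (hA : A.Nonempty) (hAL : A ⊆ L) :
    upperMinkowskiDim A < d := by
  obtain ⟨x, hx⟩ := hA
  have : Nonempty ι := ⟨(mem_iUnion.mp (hLf (hAL hx))).choose⟩
  obtain ⟨imin, himin⟩ := Finite.exists_min r
  obtain ⟨C, hC⟩ := exists_volume_cthickening_le_mul_rpow_logb hr0 hf
    (by rw [finrank_euclideanSpace_fin]; exact hsum.le) (hr0 imin) (hr1 imin) himin hL hLf
  have hδ : 0 < Real.logb (r imin) (∑ i, r i ^ d) :=
    Real.logb_pos_of_base_lt_one (hr0 imin) (hr1 imin)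
      (Finset.sum_pos (fun i _ => pow_pos (hr0 i) d) Finset.univ_nonempty) hsum
  have hdim := upperMinkowskiDim_le_of_volume_cthickening_le ⟨x, hx⟩ (C := C) <| by
    filter_upwards [Ioc_mem_nhdsGT one_pos] with ε ⟨hε0, hε1⟩
    have h := (measure_mono (cthickening_subset_of_subset ε hAL)).trans (hC ε hε0 hε1)
    rwa [finrank_euclideanSpace_fin] at h
  linarith

theorem stmt10_general {d m : ℕ} (hd : 1 ≤ d)
    (ψ : Fin (m + 1) → EuclideanSpace ℝ (Fin d) → EuclideanSpace ℝ (Fin d))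
    (r : Fin (m + 1) → ℝ)
    (hψ : ∀ i, 0 < r i ∧ r i < 1 ∧
      ∀ x y, dist (ψ i x) (ψ i y) = r i * dist x y)
    (K : Set (EuclideanSpace ℝ (Fin d)))
    (hK : IsCompact K) (hKne : K.Nonempty) (hattr : K = ⋃ i, ψ i '' K)
    (hsum : ∑ i, r i ^ d = 1)
    (hlast : ψ (Fin.last m) '' K ⊆ interior K)
    (L : Set (EuclideanSpace ℝ (Fin d)))
    (hL : IsCompact L) (hLne : L.Nonempty)
    (hLattr : L = ⋃ i : Fin m, ψ i.castSucc '' L) :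
    frontier K ⊆ L ∧ upperMinkowskiDim (frontier K) < d := by
  have hr0 i : 0 < r i := (hψ i).1
  have hr1 i : r i < 1 := (hψ i).2.1
  have hdist i : ∀ x y, dist (ψ i x) (ψ i y) = r i * dist x y := (hψ i).2.2
  have hfrontier : frontier K ⊆ L := frontier_subset_of_image_last_subset_interior hr0 hr1 hdist
    hK hattr hlast hL.isClosed hLne hLattr
  have hθ : ∑ i : Fin m, r i.castSucc ^ d < 1 := by
    rw [Fin.sum_univ_castSucc] at hsum
    linarith [pow_pos (hr0 (Fin.last m)) d]
  have : Nonempty (Fin d) := Fin.pos_iff_nonempty.mp hd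
  exact ⟨hfrontier, upperMinkowskiDim_lt_of_subset_attractor
    (f := fun i : Fin m => ψ i.castSucc) (r := fun i : Fin m => r i.castSucc) (fun i => hr0 _)
    (fun i => hr1 _) (fun i => hdist _) hθ hL hLattr.subset
    (nonempty_frontier_iff.mpr ⟨hKne, hK.ne_univ⟩) hfrontier⟩

/-- Let `K ⊆ ℝ^d` be the attractor of contracting similarities `ψ₀,…,ψ_m` with
ratios `r i` satisfying the open set condition and `Σ rᵢ^d = 1` (full Minkowski
dimension), and suppose the last map satisfies `ψ_m(K) ⊆ K°`. Then `∂K ⊆ L`, where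
`L` is the attractor of the first `m` maps, and the upper Minkowski dimension of
`∂K` is strictly less than `d`. -/
theorem stmt10 {d m : ℕ} (hd : 1 ≤ d) (hm : 1 ≤ m)
    (ψ : Fin (m + 1) → EuclideanSpace ℝ (Fin d) → EuclideanSpace ℝ (Fin d))
    (r : Fin (m + 1) → ℝ)
    (hψ : ∀ i, 0 < r i ∧ r i < 1 ∧
      ∀ x y, dist (ψ i x) (ψ i y) = r i * dist x y)
    (K O : Set (EuclideanSpace ℝ (Fin d)))
    (hK : IsCompact K) (hKne : K.Nonempty) (hattr : K = ⋃ i, ψ i '' K)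
    (hOopen : IsOpen O) (hOne : O.Nonempty)
    (hOfeas : (⋃ i, ψ i '' O) ⊆ O)
    (hOdisj : Pairwise fun i j => Disjoint (ψ i '' O) (ψ j '' O))
    (hsum : ∑ i, r i ^ d = 1)
    (hlast : ψ (Fin.last m) '' K ⊆ interior K)
    (L : Set (EuclideanSpace ℝ (Fin d)))
    (hL : IsCompact L) (hLne : L.Nonempty)
    (hLattr : L = ⋃ i : Fin m, ψ i.castSucc '' L) :
    frontier K ⊆ L ∧ upperMinkowskiDim (frontier K) < d :=
  stmt10_general hd ψ r hψ K hK hKne hattr hsum hlast L hL hLne hLattr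
end

section
/- Let F ⊂ ℝ^d be the attractor of contracting similarities φ₁,…,φ_N satisfying the open set condition with Minkowski dimension strictly less than d. Then F possesses a compatible self-similar tiling (i.e., there is a feasible open set U for the OSC with ∂U ⊆ F) if and only if the complement of F is disconnected. -/
/-!
Since `∑ rᵢ ^ d < 1`, the self-similarity of `F` forces its `d`-dimensional Hausdorff
measure to vanish, so `F` has empty interior. Hence a nonempty bounded open `U` with
`∂U ⊆ F` has points off `F`, and `U` and the exterior of `U` separate `Fᶜ`.

Conversely, if `Fᶜ` is disconnected it has a bounded component `B` (for `d ≥ 2` because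
the complement of a large ball is connected, for `d = 1` because `F` has two points and
a gap between them), and `∂B ⊆ F`. A long word `σ` maps `B` into `O` near a point of
`O ∩ F`; the union `U` of all images `φ_τ (φ_σ B)` is then a feasible open set inside `O`.
The tiles shrink geometrically towards `F`, so they accumulate only on `F`, which gives
`∂U ⊆ F`.
-/

open Metric Set Bornology Filter Topology Function MeasureTheory
open scoped NNReal ENNReal

lemma isOpenMap_of_dist_eq_mul {E : Type*} [NormedAddCommGroup E] [NormedSpace ℝ E]
    [StrictConvexSpace ℝ E] [FiniteDimensional ℝ E] {f : E → E} {r : ℝ} (hr : 0 < r)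
    (hf : ∀ x y, dist (f x) (f y) = r * dist x y) : IsOpenMap f := by
  have hg : Isometry fun x => r⁻¹ • f x := Isometry.of_dist_eq fun x y => by
    rw [dist_smul₀, hf, Real.norm_of_nonneg (inv_nonneg.2 hr.le), inv_mul_cancel_left₀ hr.ne']
  let _ : Inhabited E := ⟨0⟩
  let e := hg.affineIsometryOfStrictConvexSpace.toAffineIsometryEquiv rfl
  have hfe : f = (r • ·) ∘ e := funext fun x => (smul_inv_smul₀ hr.ne' (f x)).symm
  rw [hfe]
  exact (isOpenMap_smul₀ hr.ne').comp e.toHomeomorph.isOpenMap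

lemma hausdorffMeasure_eq_zero_of_subset_iUnion_image {X ι : Type*} [EMetricSpace X]
    [MeasurableSpace X] [BorelSpace X] [Fintype ι] {φ : ι → X → X} {r : ι → ℝ≥0} {s : ℝ}
    (hs : 0 ≤ s) (hφ : ∀ i, LipschitzWith (r i) (φ i)) {F : Set X} (hF : F ⊆ ⋃ i, φ i '' F)
    (hr : ∑ i, (r i : ℝ≥0∞) ^ s < 1) (hfin : μH[s] F ≠ ∞) : μH[s] F = 0 := by
  have hle : μH[s] F ≤ (∑ i, (r i : ℝ≥0∞) ^ s) * μH[s] F :=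
    calc μH[s] F ≤ ∑ i, μH[s] (φ i '' F) :=
          (measure_mono hF).trans (measure_iUnion_fintype_le _ _)
      _ ≤ ∑ i, (r i : ℝ≥0∞) ^ s * μH[s] F :=
        Finset.sum_le_sum fun i _ => (hφ i).hausdorffMeasure_image_le hs F
      _ = _ := (Finset.sum_mul _ _ _).symm
  by_contra h0
  exact (hle.trans_lt (by simpa using ENNReal.mul_lt_mul_left h0 hfin hr)).false

lemma interior_eq_empty_of_subset_iUnion_image {E ι : Type*} [NormedAddCommGroup E]
    [NormedSpace ℝ E] [FiniteDimensional ℝ E] [MeasurableSpace E] [BorelSpace E] [Fintype ι]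
    {φ : ι → E → E} {r : ι → ℝ≥0} (hφ : ∀ i, LipschitzWith (r i) (φ i)) {F : Set E}
    (hF : IsCompact F) (hFφ : F ⊆ ⋃ i, φ i '' F) (hr : ∑ i, r i ^ Module.finrank ℝ E < 1) :
    interior F = ∅ := by
  refine Measure.interior_eq_empty_of_null (μ := μH[Module.finrank ℝ E]) ?_
  refine hausdorffMeasure_eq_zero_of_subset_iUnion_image (Nat.cast_nonneg _) hφ hFφ ?_
    hF.measure_lt_top.ne
  simp_rw [ENNReal.rpow_natCast, ← ENNReal.coe_pow, ← ENNReal.ofNNReal_finsetSum]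
  exact ENNReal.coe_lt_one_iff.2 hr

lemma not_isPreconnected_compl_of_frontier_subset {E : Type*} [NormedAddCommGroup E]
    [NormedSpace ℝ E] [Nontrivial E] {F U : Set E} (hF : IsBounded F) (hint : interior F = ∅)
    (hU : IsOpen U) (hUbdd : IsBounded U) (hUne : U.Nonempty) (hUF : frontier U ⊆ F) :
    ¬IsPreconnected Fᶜ := by
  intro hpre
  have hin : (Fᶜ ∩ U).Nonempty := by
    rw [inter_comm]
    exact (interior_eq_empty_iff_dense_compl.1 hint).inter_open_nonempty U hU hUne
  have hout : (Fᶜ ∩ (closure U)ᶜ).Nonempty := by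
    obtain ⟨x, hx⟩ := nonempty_compl.2 fun h =>
      NormedSpace.unbounded_univ ℝ E (h ▸ hUbdd.closure.union hF)
    exact ⟨x, fun hxF => hx (Or.inr hxF), fun hxU => hx (Or.inl hxU)⟩
  have hcover : Fᶜ ⊆ U ∪ (closure U)ᶜ := fun x hxF => (em (x ∈ U)).elim Or.inl
    fun hxU => Or.inr fun hxc => hxF (hUF ⟨hxc, by rwa [hU.interior_eq]⟩)
  obtain ⟨x, -, hxU, hxc⟩ := hpre U _ hU isClosed_closure.isOpen_compl hcover hin hout
  exact hxc (subset_closure hxU)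

lemma closure_connectedComponentIn_diff_subset {X : Type*} [TopologicalSpace X]
    [LocallyConnectedSpace X] {s : Set X} (hs : IsOpen s) (x : X) :
    closure (connectedComponentIn s x) \ connectedComponentIn s x ⊆ sᶜ := by
  rintro y ⟨hyc, hyC⟩ hys
  obtain ⟨z, hzy, hzx⟩ := _root_.mem_closure_iff.1 hyc _ hs.connectedComponentIn
    (mem_connectedComponentIn hys)
  rw [connectedComponentIn_eq hzx, ← connectedComponentIn_eq hzy] at hyC
  exact hyC (mem_connectedComponentIn hys)

lemma exists_connectedComponentIn_disjoint {X : Type*} [TopologicalSpace X] {s A : Set X}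
    (hs : ¬IsPreconnected s) (hA : IsPreconnected A) (hAs : A ⊆ s) :
    ∃ w ∈ s, Disjoint (connectedComponentIn s w) A := by
  by_contra! h
  obtain ⟨w₀, hw₀⟩ : s.Nonempty := nonempty_iff_ne_empty.2 fun h => hs (h ▸ isPreconnected_empty)
  obtain ⟨a, ha, haA⟩ := not_disjoint_iff.1 (h w₀ hw₀)
  suffices s ⊆ connectedComponentIn s a from
    hs ((connectedComponentIn_subset s a).antisymm this ▸ isPreconnected_connectedComponentIn)
  intro w hw
  obtain ⟨b, hb, hbA⟩ := not_disjoint_iff.1 (h w hw)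
  have : a ∈ connectedComponentIn s w := by
    rw [connectedComponentIn_eq hb]
    exact hA.subset_connectedComponentIn hbA hAs haA
  rw [← connectedComponentIn_eq this]
  exact mem_connectedComponentIn hw

lemma isConnected_compl_closedBall {E : Type*} [NormedAddCommGroup E] [NormedSpace ℝ E]
    (h : 1 < Module.rank ℝ E) {R : ℝ} (hR : 0 ≤ R) : IsConnected (closedBall (0 : E) R)ᶜ := by
  have hconn : IsConnected ((fun p : E × ℝ => p.2 • p.1) '' (sphere 0 1 ×ˢ Ioi R)) :=
    ((isConnected_sphere h 0 zero_le_one).prod isConnected_Ioi).image _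
      (continuous_snd.smul continuous_fst).continuousOn
  convert hconn using 1
  ext x
  simp only [mem_compl_iff, mem_closedBall, dist_zero_right, not_le, mem_image, mem_prod,
    mem_sphere_iff_norm, sub_zero, mem_Ioi, Prod.exists]
  constructor
  · intro hx
    have hx0 : ‖x‖ ≠ 0 := (hR.trans_lt hx).ne'
    exact ⟨‖x‖⁻¹ • x, ‖x‖, ⟨by simp [norm_smul, hx0], hx⟩, smul_inv_smul₀ hx0 x⟩
  · rintro ⟨u, t, ⟨hu, ht⟩, rfl⟩
    simpa [norm_smul, hu, abs_of_pos (hR.trans_lt ht)] using ht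

lemma exists_isBounded_connectedComponentIn_compl_of_one_lt_rank {E : Type*}
    [NormedAddCommGroup E] [NormedSpace ℝ E] (h : 1 < Module.rank ℝ E) {F : Set E}
    (hF : IsBounded F) (hsep : ¬IsPreconnected Fᶜ) :
    ∃ w ∉ F, IsBounded (connectedComponentIn Fᶜ w) := by
  obtain ⟨R, hR, hFR⟩ := hF.subset_closedBall_lt 0 0
  obtain ⟨w, hw, hdisj⟩ := exists_connectedComponentIn_disjoint hsep
    (isConnected_compl_closedBall h hR.le).isPreconnected (compl_subset_compl.2 hFR)
  exact ⟨w, hw, isBounded_closedBall.subset (disjoint_compl_right_iff_subset.1 hdisj)⟩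

lemma connectedComponentIn_compl_subset_preimage_Ioo {X : Type*} [TopologicalSpace X]
    {L : X → ℝ} (hL : Continuous L) (hinj : Injective L) {K : Set X} {p q w : X} (hp : p ∈ K)
    (hq : q ∈ K) (hw : L w ∈ Ioo (L p) (L q)) :
    connectedComponentIn Kᶜ w ⊆ L ⁻¹' Ioo (L p) (L q) := by
  set C := connectedComponentIn Kᶜ w
  have hC : IsPreconnected (L '' C) := isPreconnected_connectedComponentIn.image L hL.continuousOn
  have hK : ∀ z ∈ K, L z ∉ L '' C := by
    rintro z hz ⟨c, hc, hcz⟩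
    exact connectedComponentIn_subset _ _ hc (hinj hcz ▸ hz)
  intro c hc
  have hwC : w ∈ C := mem_connectedComponentIn (connectedComponentIn_nonempty_iff.1 ⟨c, hc⟩)
  constructor
  · by_contra! hcp
    exact hK p hp (hC.Icc_subset (mem_image_of_mem L hc) (mem_image_of_mem L hwC) ⟨hcp, hw.1.le⟩)
  · by_contra! hcq
    exact hK q hq (hC.Icc_subset (mem_image_of_mem L hwC) (mem_image_of_mem L hc) ⟨hw.2.le, hcq⟩)

lemma exists_isBounded_connectedComponentIn_compl_of_fin_one
    {F : Set (EuclideanSpace ℝ (Fin 1))} (hint : interior F = ∅) {p q : EuclideanSpace ℝ (Fin 1)}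
    (hp : p ∈ F) (hq : q ∈ F) (hpq : p ≠ q) : ∃ w ∉ F, IsBounded (connectedComponentIn Fᶜ w) := by
  have hL : Isometry fun x : EuclideanSpace ℝ (Fin 1) => x 0 :=
    Isometry.of_dist_eq fun x y => by
      simp [EuclideanSpace.dist_eq, Real.dist_eq, Real.sqrt_sq_eq_abs]
  wlog hlt : p 0 < q 0 generalizing p q
  · exact this hq hp hpq.symm ((hL.injective.ne hpq).symm.lt_of_le (not_lt.1 hlt))
  set V := (fun x : EuclideanSpace ℝ (Fin 1) => x 0) ⁻¹' Ioo (p 0) (q 0)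
  have hV : V.Nonempty :=
    ⟨WithLp.toLp 2 fun _ => (p 0 + q 0) / 2, by simp [V]; constructor <;> linarith⟩
  obtain ⟨w, hwV, hwF⟩ := (interior_eq_empty_iff_dense_compl.1 hint).inter_open_nonempty V
    (isOpen_Ioo.preimage hL.continuous) hV
  exact ⟨w, hwF, (hL.antilipschitz.isBounded_preimage (isBounded_Ioo _ _)).subset
    (connectedComponentIn_compl_subset_preimage_Ioo hL.continuous hL.injective hp hq hwV)⟩

lemma exists_isBounded_connectedComponentIn_compl {d : ℕ} (hd : 1 ≤ d)
    {F : Set (EuclideanSpace ℝ (Fin d))} (hF : IsBounded F) (hint : interior F = ∅)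
    {p q : EuclideanSpace ℝ (Fin d)} (hp : p ∈ F) (hq : q ∈ F) (hpq : p ≠ q)
    (hsep : ¬IsPreconnected Fᶜ) : ∃ w ∉ F, IsBounded (connectedComponentIn Fᶜ w) := by
  obtain rfl | hd := hd.eq_or_lt
  · exact exists_isBounded_connectedComponentIn_compl_of_fin_one hint hp hq hpq
  · refine exists_isBounded_connectedComponentIn_compl_of_one_lt_rank ?_ hF hsep
    rw [← Module.finrank_eq_rank, finrank_euclideanSpace_fin]
    exact_mod_cast hd

lemma closure_image_diff_subset {X Y : Type*} [TopologicalSpace X] [TopologicalSpace Y]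
    [T2Space Y] {f : X → Y} (hf : Continuous f) {G : Set X} (hG : IsCompact (closure G)) :
    closure (f '' G) \ f '' G ⊆ f '' (closure G \ G) := by
  rintro x ⟨hx, hxG⟩
  rw [← image_closure_of_isCompact hG hf.continuousOn] at hx
  obtain ⟨y, hy, rfl⟩ := hx
  exact ⟨y, ⟨hy, fun hyG => hxG (mem_image_of_mem f hyG)⟩, rfl⟩

lemma closure_iUnion_diff_subset {X α : Type*} [PseudoMetricSpace X] {T : α → Set X}
    {F : Set X} (hF : IsClosed F) (hT : ∀ a, closure (T a) \ T a ⊆ F)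
    (hfin : ∀ δ > 0, {a | ¬ T a ⊆ thickening δ F}.Finite) :
    closure (⋃ a, T a) \ ⋃ a, T a ⊆ F := by
  rintro x ⟨hxc, hxT⟩
  by_contra hxF
  obtain ⟨δ, hδ, hxδ⟩ : ∃ δ > 0, x ∉ cthickening δ F := by
    rw [← hF.closure_eq, closure_eq_iInter_cthickening] at hxF
    simpa using hxF
  set S := {a | ¬ T a ⊆ thickening δ F}
  have hcover : ⋃ a, T a ⊆ (⋃ a ∈ S, T a) ∪ thickening δ F := by
    refine iUnion_subset fun a => ?_
    by_cases ha : a ∈ S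
    · exact subset_union_of_subset_left (subset_biUnion_of_mem ha) _
    · exact subset_union_of_subset_right (not_not.1 ha) _
  have hclosure := closure_mono hcover hxc
  rw [closure_union, (hfin δ hδ).closure_biUnion] at hclosure
  rcases hclosure with hx | hx
  · obtain ⟨a, -, hxa⟩ := mem_iUnion₂.1 hx
    exact hxF (hT a ⟨hxa, fun h => hxT (mem_iUnion_of_mem a h)⟩)
  · exact hxδ (closure_thickening_subset_cthickening δ F hx)

section IteratedFunctionSystem

variable {X ι : Type*}

def wordMap (φ : ι → X → X) (σ : List ι) : X → X :=
  σ.foldr (fun i g => φ i ∘ g) id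

@[simp] lemma wordMap_nil (φ : ι → X → X) : wordMap φ [] = id := rfl

@[simp] lemma wordMap_cons (φ : ι → X → X) (i : ι) (σ : List ι) :
    wordMap φ (i :: σ) = φ i ∘ wordMap φ σ := rfl

lemma mapsTo_wordMap {φ : ι → X → X} {s : Set X} (h : ∀ i, MapsTo (φ i) s s) (σ : List ι) :
    MapsTo (wordMap φ σ) s s := by
  induction σ with
  | nil => exact mapsTo_id s
  | cons i σ ih => exact (h i).comp ih

lemma exists_wordMap_mem_image {φ : ι → X → X} {F : Set X} (hF : F ⊆ ⋃ i, φ i '' F) (n : ℕ) :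
    ∀ x ∈ F, ∃ σ : List ι, σ.length = n ∧ x ∈ wordMap φ σ '' F := by
  induction n with
  | zero => exact fun x hx => ⟨[], rfl, x, hx, rfl⟩
  | succ n ih =>
    intro x hx
    obtain ⟨i, z, hz, rfl⟩ := mem_iUnion.1 (hF hx)
    obtain ⟨σ, hσ, w, hw, rfl⟩ := ih z hz
    exact ⟨i :: σ, by simp [hσ], w, hw, rfl⟩

def tileUnion (φ : ι → X → X) (G : Set X) : Set X :=
  ⋃ σ : List ι, wordMap φ σ '' G

lemma subset_tileUnion {φ : ι → X → X} {G : Set X} : G ⊆ tileUnion φ G :=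
  fun x hx => mem_iUnion_of_mem [] ⟨x, hx, rfl⟩

lemma iUnion_image_tileUnion_subset (φ : ι → X → X) (G : Set X) :
    ⋃ i, φ i '' tileUnion φ G ⊆ tileUnion φ G := by
  simp only [tileUnion, iUnion_subset_iff, image_iUnion, ← image_comp]
  exact fun i σ => subset_iUnion (fun τ => wordMap φ τ '' G) (i :: σ)

lemma tileUnion_subset {φ : ι → X → X} {G O : Set X} (hO : ∀ i, MapsTo (φ i) O O)
    (hGO : G ⊆ O) : tileUnion φ G ⊆ O :=
  iUnion_subset fun σ => (image_mono hGO).trans (mapsTo_wordMap hO σ).image_subset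

lemma isOpenMap_wordMap [TopologicalSpace X] {φ : ι → X → X} (h : ∀ i, IsOpenMap (φ i))
    (σ : List ι) : IsOpenMap (wordMap φ σ) := by
  induction σ with
  | nil => exact IsOpenMap.id
  | cons i σ ih => exact (h i).comp ih

lemma isOpen_tileUnion [TopologicalSpace X] {φ : ι → X → X} (h : ∀ i, IsOpenMap (φ i))
    {G : Set X} (hG : IsOpen G) : IsOpen (tileUnion φ G) :=
  isOpen_iUnion fun σ => isOpenMap_wordMap h σ G hG

variable [MetricSpace X]

lemma lipschitzWith_wordMap {φ : ι → X → X} {K : ℝ≥0} (h : ∀ i, LipschitzWith K (φ i))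
    (σ : List ι) : LipschitzWith (K ^ σ.length) (wordMap φ σ) := by
  induction σ with
  | nil => simpa using LipschitzWith.id
  | cons i σ ih => simpa [pow_succ'] using (h i).comp ih

lemma exists_dist_wordMap_lt {φ : ι → X → X} {K : ℝ≥0} (hK : K < 1)
    (h : ∀ i, LipschitzWith K (φ i)) {S : Set X} (hS : IsBounded S) {δ : ℝ} (hδ : 0 < δ) :
    ∃ n, ∀ σ : List ι, n ≤ σ.length → ∀ x ∈ S, ∀ y ∈ S,
      dist (wordMap φ σ x) (wordMap φ σ y) < δ := by
  have hlim : Tendsto (fun n : ℕ => (K : ℝ) ^ n * diam S) atTop (𝓝 0) := by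
    simpa using (tendsto_pow_atTop_nhds_zero_of_lt_one K.coe_nonneg hK).mul_const (diam S)
  obtain ⟨n, hn⟩ := eventually_atTop.1 (hlim.eventually (gt_mem_nhds hδ))
  refine ⟨n, fun σ hσ x hx y hy => ?_⟩
  calc dist (wordMap φ σ x) (wordMap φ σ y) ≤ (K : ℝ) ^ σ.length * dist x y := by
        simpa using (lipschitzWith_wordMap h σ).dist_le_mul x y
    _ ≤ (K : ℝ) ^ σ.length * diam S := by gcongr; exact dist_le_diam_of_mem hS hx hy
    _ < δ := hn _ hσ

lemma exists_image_wordMap_subset_of_mem_nhds {φ : ι → X → X} {K : ℝ≥0} (hK : K < 1)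
    (h : ∀ i, LipschitzWith K (φ i)) {F G V : Set X} (hFφ : F ⊆ ⋃ i, φ i '' F)
    (hF : IsBounded F) (hG : IsBounded G) {x : X} (hx : x ∈ F) (hV : V ∈ 𝓝 x) :
    ∃ σ : List ι, wordMap φ σ '' G ⊆ V := by
  obtain ⟨ε, hε, hball⟩ := Metric.mem_nhds_iff.1 hV
  obtain ⟨n, hn⟩ := exists_dist_wordMap_lt hK h (hG.union hF) hε
  obtain ⟨σ, hσ, z, hz, rfl⟩ := exists_wordMap_mem_image hFφ n x hx
  exact ⟨σ, image_subset_iff.2 fun y hy => hball (hn σ hσ.ge y (Or.inl hy) z (Or.inr hz))⟩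

variable [ProperSpace X]

lemma closure_image_wordMap_diff_subset {φ : ι → X → X} {K : ℝ≥0}
    (h : ∀ i, LipschitzWith K (φ i)) {F G : Set X} (hφF : ∀ i, MapsTo (φ i) F F)
    (hG : IsBounded G) (hGF : closure G \ G ⊆ F) (σ : List ι) :
    closure (wordMap φ σ '' G) \ wordMap φ σ '' G ⊆ F :=
  (closure_image_diff_subset (lipschitzWith_wordMap h σ).continuous hG.isCompact_closure).trans
    ((image_mono hGF).trans (mapsTo_wordMap hφF σ).image_subset)

lemma closure_tileUnion_diff_subset [Finite ι] {φ : ι → X → X} {K : ℝ≥0} (hK : K < 1)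
    (h : ∀ i, LipschitzWith K (φ i)) {F G : Set X} (hF : IsCompact F) (hFne : F.Nonempty)
    (hφF : ∀ i, MapsTo (φ i) F F) (hG : IsBounded G) (hGF : closure G \ G ⊆ F) :
    closure (tileUnion φ G) \ tileUnion φ G ⊆ F := by
  refine closure_iUnion_diff_subset hF.isClosed
    (closure_image_wordMap_diff_subset h hφF hG hGF) fun δ hδ => ?_
  obtain ⟨n, hn⟩ := exists_dist_wordMap_lt hK h (hG.union hF.isBounded) hδ
  obtain ⟨f, hf⟩ := hFne
  refine (List.finite_length_lt ι n).subset fun σ hσ => show σ.length < n from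
    not_le.1 fun hlen => hσ (image_subset_iff.2 fun y hy => mem_thickening_iff.2 ?_)
  exact ⟨_, mapsTo_wordMap hφF σ hf, hn σ hlen y (Or.inl hy) f (Or.inr hf)⟩

theorem exists_feasible_open_frontier_subset [Fintype ι] {φ : ι → X → X} {r : ι → ℝ≥0}
    (hr : ∀ i, r i < 1) (hφ : ∀ i, LipschitzWith (r i) (φ i)) (hopen : ∀ i, IsOpenMap (φ i))
    {F O G : Set X} (hF : IsCompact F) (hFφ : F = ⋃ i, φ i '' F) (hO : IsOpen O)
    (hObdd : IsBounded O) (hOφ : (⋃ i, φ i '' O) ⊆ O)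
    (hOdisj : Pairwise fun i j => Disjoint (φ i '' O) (φ j '' O)) (hOF : (O ∩ F).Nonempty)
    (hG : IsOpen G) (hGbdd : IsBounded G) (hGne : G.Nonempty) (hGF : closure G \ G ⊆ F) :
    ∃ U : Set X, U.Nonempty ∧ IsOpen U ∧ IsBounded U ∧ (⋃ i, φ i '' U) ⊆ U ∧
      (Pairwise fun i j => Disjoint (φ i '' U) (φ j '' U)) ∧ frontier U ⊆ F := by
  obtain ⟨K, hK, hKφ⟩ : ∃ K : ℝ≥0, K < 1 ∧ ∀ i, LipschitzWith K (φ i) :=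
    ⟨Finset.univ.sup r, (Finset.sup_lt_iff zero_lt_one).2 fun i _ => hr i,
      fun i => (hφ i).weaken (Finset.le_sup (Finset.mem_univ i))⟩
  have hφF : ∀ i, MapsTo (φ i) F F := fun i => mapsTo_iff_image_subset.2 <| by
    conv_rhs => rw [hFφ]
    exact subset_iUnion (fun j => φ j '' F) i
  have hφO : ∀ i, MapsTo (φ i) O O := fun i =>
    mapsTo_iff_image_subset.2 ((subset_iUnion (fun j => φ j '' O) i).trans hOφ)
  obtain ⟨x₀, hx₀O, hx₀F⟩ := hOF
  obtain ⟨σ, hσO⟩ := exists_image_wordMap_subset_of_mem_nhds hK hKφ hFφ.subset hF.isBounded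
    hGbdd hx₀F (hO.mem_nhds hx₀O)
  have hUO : tileUnion φ (wordMap φ σ '' G) ⊆ O := tileUnion_subset hφO hσO
  have hU : IsOpen (tileUnion φ (wordMap φ σ '' G)) :=
    isOpen_tileUnion hopen (isOpenMap_wordMap hopen σ G hG)
  refine ⟨_, (hGne.image _).mono subset_tileUnion, hU, hObdd.subset hUO,
    iUnion_image_tileUnion_subset φ _,
    fun i j hij => (hOdisj hij).mono (image_mono hUO) (image_mono hUO), ?_⟩
  rw [hU.frontier_eq]
  exact closure_tileUnion_diff_subset hK hKφ hF ⟨x₀, hx₀F⟩ hφF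
    ((lipschitzWith_wordMap hKφ σ).isBounded_image hGbdd)
    (closure_image_wordMap_diff_subset hKφ hφF hGbdd hGF σ)

end IteratedFunctionSystem

theorem stmt17_general {d N : ℕ} (hd : 1 ≤ d) (hN : 2 ≤ N)
    (φ : Fin N → EuclideanSpace ℝ (Fin d) → EuclideanSpace ℝ (Fin d))
    (r : Fin N → ℝ)
    (hφ : ∀ i, 0 < r i ∧ r i < 1 ∧
      ∀ x y, dist (φ i x) (φ i y) = r i * dist x y)
    (F : Set (EuclideanSpace ℝ (Fin d)))
    (hF : IsCompact F) (hattr : F = ⋃ i, φ i '' F)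
    (hdim : ∑ i, r i ^ d < 1)
    (O : Set (EuclideanSpace ℝ (Fin d)))
    (hOopen : IsOpen O) (hObdd : IsBounded O)
    (hOfeas : (⋃ i, φ i '' O) ⊆ O)
    (hOdisj : Pairwise fun i j => Disjoint (φ i '' O) (φ j '' O))
    (hSOSC : (O ∩ F).Nonempty) :
    (∃ U : Set (EuclideanSpace ℝ (Fin d)), U.Nonempty ∧ IsOpen U ∧
        IsBounded U ∧ (⋃ i, φ i '' U) ⊆ U ∧
        (Pairwise fun i j => Disjoint (φ i '' U) (φ j '' U)) ∧
        frontier U ⊆ F) ↔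
      ¬ IsPreconnected Fᶜ := by
  have hr0 : ∀ i, 0 ≤ r i := fun i => (hφ i).1.le
  have hLip : ∀ i, LipschitzWith (r i).toNNReal (φ i) := fun i =>
    LipschitzWith.of_dist_le_mul fun x y => by rw [(hφ i).2.2, Real.coe_toNNReal _ (hr0 i)]
  have hint : interior F = ∅ := by
    refine interior_eq_empty_of_subset_iUnion_image hLip hF hattr.subset ?_
    rw [finrank_euclideanSpace_fin, ← NNReal.coe_lt_coe]
    simpa [Real.coe_toNNReal _ (hr0 _)] using hdim
  have : Nonempty (Fin d) := ⟨⟨0, hd⟩⟩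
  constructor
  · rintro ⟨U, hUne, hUopen, hUbdd, -, -, hUF⟩
    exact not_isPreconnected_compl_of_frontier_subset hF.isBounded hint hUopen hUbdd hUne hUF
  · intro hsep
    obtain ⟨x₀, hx₀O, hx₀F⟩ := hSOSC
    have hmem : ∀ i, φ i x₀ ∈ F := fun i =>
      hattr ▸ mem_iUnion_of_mem i (mem_image_of_mem _ hx₀F)
    have hne : φ ⟨0, by omega⟩ x₀ ≠ φ ⟨1, by omega⟩ x₀ := fun h => disjoint_left.1
      (hOdisj (Fin.ne_of_val_ne zero_ne_one)) (mem_image_of_mem _ hx₀O)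
      (by rw [h]; exact mem_image_of_mem _ hx₀O)
    obtain ⟨w, hwF, hbdd⟩ := exists_isBounded_connectedComponentIn_compl hd hF.isBounded hint
      (hmem _) (hmem _) hne hsep
    refine exists_feasible_open_frontier_subset (fun i => Real.toNNReal_lt_one.2 (hφ i).2.1) hLip
      (fun i => isOpenMap_of_dist_eq_mul (hφ i).1 (hφ i).2.2) hF hattr hOopen hObdd hOfeas hOdisj
      ⟨x₀, hx₀O, hx₀F⟩ hF.isClosed.isOpen_compl.connectedComponentIn hbdd
      ⟨w, mem_connectedComponentIn hwF⟩ ?_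
    simpa using closure_connectedComponentIn_diff_subset hF.isClosed.isOpen_compl w

/-- Let `F ⊆ ℝ^d` be the attractor of contracting similarities `φ₁,…,φ_N` with
ratios `rᵢ` satisfying the (strong) open set condition and with Minkowski dimension
strictly less than `d` (i.e. `Σ rᵢ^d < 1`). Then `F` possesses a compatible
self-similar tiling — i.e. there is a (bounded, nonempty) feasible open set `U`
with `∂U ⊆ F` — if and only if the complement of `F` is disconnected. -/
theorem stmt17 {d N : ℕ} (hd : 1 ≤ d) (hN : 2 ≤ N)
    (φ : Fin N → EuclideanSpace ℝ (Fin d) → EuclideanSpace ℝ (Fin d))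
    (r : Fin N → ℝ)
    (hφ : ∀ i, 0 < r i ∧ r i < 1 ∧
      ∀ x y, dist (φ i x) (φ i y) = r i * dist x y)
    (F : Set (EuclideanSpace ℝ (Fin d)))
    (hF : IsCompact F) (hFne : F.Nonempty) (hattr : F = ⋃ i, φ i '' F)
    (hdim : ∑ i, r i ^ d < 1)
    (O : Set (EuclideanSpace ℝ (Fin d)))
    (hOopen : IsOpen O) (hObdd : IsBounded O) (hOne : O.Nonempty)
    (hOfeas : (⋃ i, φ i '' O) ⊆ O)
    (hOdisj : Pairwise fun i j => Disjoint (φ i '' O) (φ j '' O))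
    (hSOSC : (O ∩ F).Nonempty) :
    (∃ U : Set (EuclideanSpace ℝ (Fin d)), U.Nonempty ∧ IsOpen U ∧
        IsBounded U ∧ (⋃ i, φ i '' U) ⊆ U ∧
        (Pairwise fun i j => Disjoint (φ i '' U) (φ j '' U)) ∧
        frontier U ⊆ F) ↔
      ¬ IsPreconnected Fᶜ :=
  stmt17_general hd hN φ r hφ F hF hattr hdim O hOopen hObdd hOfeas hOdisj hSOSC
end
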